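/- Let J be a fixed real d×M matrix whose columns have Euclidean norm at most G (G ≥ 0), let w ∈ Δ_M be fixed, and let Y_1, Y_2 : Ω → ℝ^{d×M} be independent random matrices such that E‖Y_j − J‖_op ≤ α and E‖(Y_j − J)w‖ ≤ γ for j ∈ {1,2} (with the relevant integrability). Then E‖Y_1ᵀ Y_2 w‖ ≤ α·γ + α·G + √M·G·γ + √M·G². In particular, if α = √M·√c and γ = √c for some c ≥ 0, then E‖Y_1ᵀ Y_2 w‖ ≤ √M·(√c + G)². -/

import Mathlib

open MeasureTheory
open scoped BigOperators Matrix

/-- Euclidean norm of a vector in `ℝ^n`. -/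
noncomputable def eNorm {n : ℕ} (v : Fin n → ℝ) : ℝ :=
  Real.sqrt (∑ i, v i ^ 2)

/-- Operator norm of a real `d × M` matrix with respect to Euclidean norms. -/
noncomputable def opNorm {d M : ℕ} (A : Matrix (Fin d) (Fin M) ℝ) : ℝ :=
  ‖LinearMap.toContinuousLinearMap (Matrix.toEuclideanLin A)‖

/-- The (entrywise) measurable space structure on matrices. -/
instance matrixMeasurableSpace {m n α : Type*} [MeasurableSpace α] :
    MeasurableSpace (Matrix m n α) :=
  inferInstanceAs (MeasurableSpace (m → n → α))

/-!
Write `Yⱼ = Aⱼ + J`. Pointwise, `‖Y₁ᵀ Y₂ w‖ ≤ ‖Y₁‖_op ‖Y₂ w‖ ≤ (‖A₁‖_op + ‖J‖_op) (‖A₂ w‖ + ‖J w‖)`,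
and the column bound gives `‖J w‖ ≤ G` for `w` in the simplex and, by Cauchy–Schwarz,
`‖J‖_op ≤ √M G`. The two factors are functions of `Y₁` and of `Y₂` respectively, hence
independent, so the expectation of their product is the product `(α + √M G) (γ + G)` of their
expectations, which expands to the claimed bound.
-/

-- Under this norm `opNorm A` is definitionally `‖A‖`, and the topology is still the entrywise one.
open scoped Matrix.Norms.L2Operator

instance {m n : Type*} [Fintype m] [Fintype n] : BorelSpace (Matrix m n ℝ) :=
  ⟨(inferInstance : BorelSpace (m → n → ℝ)).measurable_eq⟩

lemma eNorm_eq_norm {n : ℕ} (v : Fin n → ℝ) :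
    eNorm v = ‖(EuclideanSpace.equiv (Fin n) ℝ).symm v‖ := by
  rw [EuclideanSpace.norm_eq]
  simp [eNorm, sq_abs]

lemma eNorm_nonneg {n : ℕ} (v : Fin n → ℝ) : 0 ≤ eNorm v := Real.sqrt_nonneg _

lemma opNorm_nonneg {d M : ℕ} (A : Matrix (Fin d) (Fin M) ℝ) : 0 ≤ opNorm A := norm_nonneg _

lemma eNorm_add_le {n : ℕ} (u v : Fin n → ℝ) : eNorm (u + v) ≤ eNorm u + eNorm v := by
  simp only [eNorm_eq_norm, map_add]
  exact norm_add_le _ _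

lemma continuous_eNorm {n : ℕ} : Continuous (eNorm : (Fin n → ℝ) → ℝ) := by
  simp only [funext eNorm_eq_norm]
  exact continuous_norm.comp (EuclideanSpace.equiv (Fin n) ℝ).symm.continuous

lemma opNorm_transpose {d M : ℕ} (A : Matrix (Fin d) (Fin M) ℝ) : opNorm Aᵀ = opNorm A :=
  Matrix.l2_opNorm_conjTranspose A

lemma eNorm_mulVec_le {d M : ℕ} (A : Matrix (Fin d) (Fin M) ℝ) (x : Fin M → ℝ) :
    eNorm (A *ᵥ x) ≤ opNorm A * eNorm x := by
  rw [eNorm_eq_norm, eNorm_eq_norm]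
  exact A.l2_opNorm_mulVec _

lemma eNorm_mulVec_le_sum_abs_mul {d M : ℕ} (J : Matrix (Fin d) (Fin M) ℝ) (x : Fin M → ℝ) :
    eNorm (J *ᵥ x) ≤ ∑ k, |x k| * eNorm (fun i => J i k) := by
  have hcols : J *ᵥ x = ∑ k, x k • (fun i => J i k) := by
    rw [Matrix.mulVec_eq_sum]
    simp only [op_smul_eq_smul]
    rfl
  simp only [hcols, eNorm_eq_norm, map_sum, map_smul]
  refine (norm_sum_le _ _).trans_eq ?_
  simp only [norm_smul, Real.norm_eq_abs]

lemma sum_abs_le_sqrt_card_mul_eNorm {M : ℕ} (x : Fin M → ℝ) :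
    ∑ k, |x k| ≤ Real.sqrt M * eNorm x := by
  rw [eNorm, ← Real.sqrt_mul (Nat.cast_nonneg M)]
  refine le_trans (le_abs_self _) (Real.abs_le_sqrt ?_)
  simpa [sq_abs] using sq_sum_le_card_mul_sum_sq (s := Finset.univ) (f := fun k => |x k|)

section ColumnBound

variable {d M : ℕ} {G : ℝ} {J : Matrix (Fin d) (Fin M) ℝ}

lemma eNorm_mulVec_le_of_mem_stdSimplex (hJ : ∀ k : Fin M, eNorm (fun i => J i k) ≤ G)
    {w : Fin M → ℝ} (hw : w ∈ stdSimplex ℝ (Fin M)) : eNorm (J *ᵥ w) ≤ G := by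
  calc eNorm (J *ᵥ w) ≤ ∑ k, |w k| * eNorm (fun i => J i k) := eNorm_mulVec_le_sum_abs_mul J w
    _ ≤ ∑ k, w k * G := Finset.sum_le_sum fun k _ => by
        rw [abs_of_nonneg (hw.1 k)]
        exact mul_le_mul_of_nonneg_left (hJ k) (hw.1 k)
    _ = G := by rw [← Finset.sum_mul, hw.2, one_mul]

lemma opNorm_le_sqrt_card_mul (hG : 0 ≤ G) (hJ : ∀ k : Fin M, eNorm (fun i => J i k) ≤ G) :
    opNorm J ≤ Real.sqrt M * G := by
  refine ContinuousLinearMap.opNorm_le_bound _ (by positivity) fun x => ?_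
  set v := EuclideanSpace.equiv (Fin M) ℝ x
  have hv : ‖x‖ = eNorm v := (eNorm_eq_norm v).symm
  calc ‖_‖ = eNorm (J *ᵥ v) := (eNorm_eq_norm _).symm
    _ ≤ ∑ k, |v k| * eNorm (fun i => J i k) := eNorm_mulVec_le_sum_abs_mul J v
    _ ≤ (∑ k, |v k|) * G := by
        rw [Finset.sum_mul]
        gcongr with k
        exact hJ k
    _ ≤ (Real.sqrt M * eNorm v) * G := by gcongr; exact sum_abs_le_sqrt_card_mul_eNorm v
    _ = Real.sqrt M * G * ‖x‖ := by rw [hv]; ring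

lemma eNorm_transpose_mul_mulVec_le (hG : 0 ≤ G) (hJ : ∀ k : Fin M, eNorm (fun i => J i k) ≤ G)
    {w : Fin M → ℝ} (hw : w ∈ stdSimplex ℝ (Fin M)) (A B : Matrix (Fin d) (Fin M) ℝ) :
    eNorm ((Aᵀ * B) *ᵥ w) ≤
      (opNorm (A - J) + Real.sqrt M * G) * (eNorm ((B - J) *ᵥ w) + G) := by
  have hA : opNorm A ≤ opNorm (A - J) + Real.sqrt M * G :=
    calc opNorm A ≤ opNorm (A - J) + opNorm J := norm_le_norm_sub_add A J
      _ ≤ _ := by grw [opNorm_le_sqrt_card_mul hG hJ]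
  have hB : eNorm (B *ᵥ w) ≤ eNorm ((B - J) *ᵥ w) + G := by
    calc eNorm (B *ᵥ w) = eNorm ((B - J) *ᵥ w + J *ᵥ w) := by
          rw [← Matrix.add_mulVec, sub_add_cancel]
      _ ≤ _ := (eNorm_add_le _ _).trans (by gcongr; exact eNorm_mulVec_le_of_mem_stdSimplex hJ hw)
  calc eNorm ((Aᵀ * B) *ᵥ w) = eNorm (Aᵀ *ᵥ (B *ᵥ w)) := by rw [Matrix.mulVec_mulVec]
    _ ≤ opNorm A * eNorm (B *ᵥ w) := by rw [← opNorm_transpose A]; exact eNorm_mulVec_le _ _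
    _ ≤ _ := mul_le_mul hA hB (eNorm_nonneg _) (add_nonneg (opNorm_nonneg _) (by positivity))

end ColumnBound

lemma ProbabilityTheory.IndepFun.integral_mul_le {Ω : Type*} [MeasurableSpace Ω] {μ : Measure Ω}
    {f g : Ω → ℝ} {a b : ℝ} (hfg : ProbabilityTheory.IndepFun f g μ)
    (hf : AEStronglyMeasurable f μ) (hg : AEStronglyMeasurable g μ)
    (hf₀ : 0 ≤ᵐ[μ] f) (hg₀ : 0 ≤ᵐ[μ] g) (ha : ∫ ω, f ω ∂μ ≤ a) (hb : ∫ ω, g ω ∂μ ≤ b) :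
    ∫ ω, f ω * g ω ∂μ ≤ a * b := by
  have := hfg.integral_mul_eq_mul_integral hf hg
  simp only [Pi.mul_apply] at this
  rw [this]
  exact mul_le_mul ha hb (integral_nonneg_of_ae hg₀) ((integral_nonneg_of_ae hf₀).trans ha)

theorem stmt10_general {Ω : Type*} [MeasurableSpace Ω] (μ : Measure Ω) [IsProbabilityMeasure μ]
    {d M : ℕ} {G α γ : ℝ} (hG : 0 ≤ G)
    (J : Matrix (Fin d) (Fin M) ℝ)
    (hJ : ∀ k : Fin M, eNorm (fun i => J i k) ≤ G)
    (w : Fin M → ℝ) (hw : w ∈ stdSimplex ℝ (Fin M))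
    (Y₁ Y₂ : Ω → Matrix (Fin d) (Fin M) ℝ)
    (hindep : ProbabilityTheory.IndepFun Y₁ Y₂ μ)
    (hIntOp₁ : Integrable (fun ω => opNorm (Y₁ ω - J)) μ)
    (hIntVec₂ : Integrable (fun ω => eNorm ((Y₂ ω - J).mulVec w)) μ)
    (hα₁ : ∫ ω, opNorm (Y₁ ω - J) ∂μ ≤ α)
    (hγ₂ : ∫ ω, eNorm ((Y₂ ω - J).mulVec w) ∂μ ≤ γ) :
    (∫ ω, eNorm (((Y₁ ω)ᵀ * Y₂ ω).mulVec w) ∂μ ≤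
      α * γ + α * G + Real.sqrt M * G * γ + Real.sqrt M * G ^ 2) ∧
    (∀ c : ℝ, 0 ≤ c → α = Real.sqrt M * Real.sqrt c → γ = Real.sqrt c →
      ∫ ω, eNorm (((Y₁ ω)ᵀ * Y₂ ω).mulVec w) ∂μ ≤
        Real.sqrt M * (Real.sqrt c + G) ^ 2) := by
  set φ := fun A : Matrix (Fin d) (Fin M) ℝ => opNorm (A - J) + Real.sqrt M * G
  set ψ := fun B : Matrix (Fin d) (Fin M) ℝ => eNorm ((B - J) *ᵥ w) + G
  have hφ : Measurable φ :=
    ((continuous_norm.comp (continuous_sub_right J)).add continuous_const).measurable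
  have hψ : Measurable ψ :=
    ((continuous_eNorm.comp ((continuous_sub_right J).matrix_mulVec continuous_const)).add
      continuous_const).measurable
  have hind : ProbabilityTheory.IndepFun (φ ∘ Y₁) (ψ ∘ Y₂) μ := hindep.comp hφ hψ
  have hφint : Integrable (φ ∘ Y₁) μ := hIntOp₁.add (integrable_const _)
  have hψint : Integrable (ψ ∘ Y₂) μ := hIntVec₂.add (integrable_const _)
  have hφY : ∫ ω, φ (Y₁ ω) ∂μ ≤ α + Real.sqrt M * G := by
    simpa [φ, integral_add hIntOp₁ (integrable_const _)] using hα₁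
  have hψY : ∫ ω, ψ (Y₂ ω) ∂μ ≤ γ + G := by
    simpa [ψ, integral_add hIntVec₂ (integrable_const _)] using hγ₂
  have key : ∫ ω, eNorm (((Y₁ ω)ᵀ * Y₂ ω) *ᵥ w) ∂μ ≤ (α + Real.sqrt M * G) * (γ + G) :=
    calc ∫ ω, eNorm (((Y₁ ω)ᵀ * Y₂ ω) *ᵥ w) ∂μ ≤ ∫ ω, φ (Y₁ ω) * ψ (Y₂ ω) ∂μ :=
          integral_mono_of_nonneg (.of_forall fun _ => eNorm_nonneg _)
            (hind.integrable_mul hφint hψint)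
            (.of_forall fun ω => eNorm_transpose_mul_mulVec_le hG hJ hw (Y₁ ω) (Y₂ ω))
      _ ≤ (α + Real.sqrt M * G) * (γ + G) :=
          hind.integral_mul_le hφint.1 hψint.1
            (.of_forall fun _ => add_nonneg (opNorm_nonneg _) (by positivity))
            (.of_forall fun _ => add_nonneg (eNorm_nonneg _) hG) hφY hψY
  refine ⟨key.trans_eq (by ring), fun c _ hα hγ => key.trans_eq ?_⟩
  rw [hα, hγ]
  ring

/-- Let `J` be a fixed real `d × M` matrix whose columns have Euclidean norm
at most `G` (`G ≥ 0`), `w ∈ Δ_M` fixed, and `Y₁, Y₂` independent random matrices with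
`E‖Yⱼ − J‖_op ≤ α` and `E‖(Yⱼ − J)w‖ ≤ γ` for `j ∈ {1,2}` (with the relevant integrability).
Then `E‖Y₁ᵀ Y₂ w‖ ≤ αγ + αG + √M·G·γ + √M·G²`; in particular, if `α = √M·√c` and `γ = √c`
for some `c ≥ 0`, then `E‖Y₁ᵀ Y₂ w‖ ≤ √M·(√c + G)²`. -/
theorem stmt10 {Ω : Type*} [MeasurableSpace Ω] (μ : Measure Ω) [IsProbabilityMeasure μ]
    {d M : ℕ} {G α γ : ℝ} (hG : 0 ≤ G)
    (J : Matrix (Fin d) (Fin M) ℝ)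
    (hJ : ∀ k : Fin M, eNorm (fun i => J i k) ≤ G)
    (w : Fin M → ℝ) (hw : w ∈ stdSimplex ℝ (Fin M))
    (Y₁ Y₂ : Ω → Matrix (Fin d) (Fin M) ℝ)
    (hY₁meas : Measurable Y₁) (hY₂meas : Measurable Y₂)
    (hindep : ProbabilityTheory.IndepFun Y₁ Y₂ μ)
    (hIntOp₁ : Integrable (fun ω => opNorm (Y₁ ω - J)) μ)
    (hIntOp₂ : Integrable (fun ω => opNorm (Y₂ ω - J)) μ)
    (hIntVec₁ : Integrable (fun ω => eNorm ((Y₁ ω - J).mulVec w)) μ)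
    (hIntVec₂ : Integrable (fun ω => eNorm ((Y₂ ω - J).mulVec w)) μ)
    (hα₁ : ∫ ω, opNorm (Y₁ ω - J) ∂μ ≤ α)
    (hα₂ : ∫ ω, opNorm (Y₂ ω - J) ∂μ ≤ α)
    (hγ₁ : ∫ ω, eNorm ((Y₁ ω - J).mulVec w) ∂μ ≤ γ)
    (hγ₂ : ∫ ω, eNorm ((Y₂ ω - J).mulVec w) ∂μ ≤ γ) :
    (∫ ω, eNorm (((Y₁ ω)ᵀ * Y₂ ω).mulVec w) ∂μ ≤
      α * γ + α * G + Real.sqrt M * G * γ + Real.sqrt M * G ^ 2) ∧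
    (∀ c : ℝ, 0 ≤ c → α = Real.sqrt M * Real.sqrt c → γ = Real.sqrt c →
      ∫ ω, eNorm (((Y₁ ω)ᵀ * Y₂ ω).mulVec w) ∂μ ≤
        Real.sqrt M * (Real.sqrt c + G) ^ 2) :=
  stmt10_general μ hG J hJ w hw Y₁ Y₂ hindep hIntOp₁ hIntVec₂ hα₁ hγ₂
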